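/- arXiv:2106.07073 — 3 statements merged into one kernel-verified Lean document; each statement's English description precedes it below -/
import Mathlib

section
/- Let μ = Σ_{λ∈Λ} p(λ) δ_λ, with p(λ) ∈ ℂ, be an almost periodic measure on ℝ^d with uniformly discrete support Λ. Then the masses p(λ) are uniformly bounded: sup_{λ∈Λ} |p(λ)| < ∞. -/
open Complex SchwartzMap Metric Set MeasureTheory
open scoped ContDiff ENNReal Pointwise Real

noncomputable section

/-- Euclidean space `ℝ^d`. -/
abbrev Ed (d : ℕ) : Type := EuclideanSpace ℝ (Fin d)

/-- Temperate distributions: continuous linear functionals on the Schwartz space. -/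
abbrev TempDist (d : ℕ) : Type := 𝓢(Ed d, ℂ) →L[ℂ] ℂ

namespace Paper

variable {d : ℕ}

/-- A set is locally finite if its intersection with every ball is finite. -/
def IsLocallyFinite (A : Set (Ed d)) : Prop :=
  ∀ (x : Ed d) (r : ℝ), (A ∩ Metric.ball x r).Finite

/-- The separating constant `η(A) = inf {|x - x'| : x, x' ∈ A, x ≠ x'}`
(as an extended real, so that `η(A) = ∞` when `A` has at most one point). -/
def eta (A : Set (Ed d)) : ℝ≥0∞ :=
  ⨅ (x : A) (y : A) (_ : (x : Ed d) ≠ (y : Ed d)), edist (x : Ed d) (y : Ed d)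

/-- A set is uniformly discrete if it is locally finite and `η(A) > 0`. -/
def IsUniformlyDiscrete (A : Set (Ed d)) : Prop :=
  IsLocallyFinite A ∧ 0 < eta A

/-- A locally finite set is of bounded density if `sup_x #(A ∩ B(x,1)) < ∞`. -/
def HasBoundedDensity (A : Set (Ed d)) : Prop :=
  ∃ C : ℕ, ∀ x : Ed d, (A ∩ Metric.ball x 1).Finite ∧ (A ∩ Metric.ball x 1).ncard ≤ C

/-- A full-rank lattice in `ℝ^d`: the image of `ℤ^d` under an invertible linear operator,
equivalently the integer span of a basis. -/
def IsFullRankLattice (L : Set (Ed d)) : Prop :=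
  ∃ b : Module.Basis (Fin d) ℝ (Ed d),
    L = Set.range (fun n : Fin d → ℤ => ∑ i : Fin d, (n i : ℝ) • b i)

/-- The support of a temperate distribution: `x` is in the support iff `f` does not
vanish near `x`, i.e. for every open `U ∋ x` there is a test function supported
in `U` on which `f` is nonzero. -/
def distSupport (f : TempDist d) : Set (Ed d) :=
  {x | ∀ U : Set (Ed d), IsOpen U → x ∈ U →
     ∃ φ : 𝓢(Ed d, ℂ), tsupport (⇑φ) ⊆ U ∧ f φ ≠ 0}

/-- The Fourier transform of a temperate distribution, `f̂(φ) = f(φ̂)`. -/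
def fourierT (f : TempDist d) : TempDist d :=
  f.comp (fourierTransformCLM ℂ)

/-- The spectrum of a temperate distribution: the support of its Fourier transform. -/
def spectrumOf (f : TempDist d) : Set (Ed d) := distSupport (fourierT f)

/-- The partial derivative `∂/∂x_i` of a function on `ℝ^d`. -/
def pderiv1 (i : Fin d) (φ : Ed d → ℂ) : Ed d → ℂ :=
  fun x => fderiv ℝ φ x (EuclideanSpace.single i 1)

/-- The multi-index partial derivative `D^k = ∂^{k₁}_{x₁} ⋯ ∂^{k_d}_{x_d}`. -/
def multiDeriv (k : Fin d → ℕ) (φ : Ed d → ℂ) : Ed d → ℂ :=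
  ((List.ofFn fun i : Fin d => (pderiv1 i)^[k i]).foldr (· ∘ ·) id) φ

/-- The action of `D^k δ_λ` on a test function: `(D^k δ_λ)(φ) = (-1)^{‖k‖} (D^k φ)(λ)`. -/
def diracTerm (k : Fin d → ℕ) (l : Ed d) (φ : 𝓢(Ed d, ℂ)) : ℂ :=
  (-1 : ℂ) ^ (∑ i : Fin d, k i) * multiDeriv k (⇑φ) l

/-- `f = Σ_{λ∈Λ} Σ_k p_k(λ) D^k δ_λ`, with the inner sum finite for each `λ`. -/
def HasRep (f : TempDist d) (Λ : Set (Ed d)) (p : Ed d → (Fin d → ℕ) → ℂ) : Prop :=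
  (∀ l : Ed d, l ∉ Λ → ∀ k, p l k = 0) ∧
  (∀ l : Ed d, {k : Fin d → ℕ | p l k ≠ 0}.Finite) ∧
  (∀ φ : 𝓢(Ed d, ℂ),
    HasSum (fun l : Λ => ∑' k : Fin d → ℕ, p (l : Ed d) k * diracTerm k (l : Ed d) φ) (f φ))

/-- A relatively dense subset of a pseudometric space. -/
def RelDense {X : Type*} [PseudoMetricSpace X] (T : Set X) : Prop :=
  ∃ R : ℝ, 0 < R ∧ ∀ x : X, ∃ τ ∈ T, dist x τ ≤ R

/-- Bohr almost periodic function (with values in `ℂ`): for every `ε > 0` the set of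
`ε`-almost periods is relatively dense. -/
def APFun {V : Type*} [SeminormedAddCommGroup V] (g : V → ℂ) : Prop :=
  Continuous g ∧ ∀ ε : ℝ, 0 < ε →
    RelDense {τ : V | ∀ t : V, ‖g (t + τ) - g t‖ < ε}

/-- Almost periodicity of the purely point measure `μ = Σ_{λ∈Λ} p(λ) δ_λ`:
for every `C^∞` function `φ` with compact support, the function
`t ↦ (μ(y), φ(t−y)) = Σ_{λ∈Λ} p(λ) φ(t−λ)` is almost periodic. -/
def APMeasure (Λ : Set (Ed d)) (p : Ed d → ℂ) : Prop :=
  ∀ φ : Ed d → ℂ, ContDiff ℝ ∞ φ → HasCompactSupport φ →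
    APFun (fun t : Ed d => ∑' l : Λ, p (l : Ed d) * φ (t - (l : Ed d)))

/-- `Λ` is contained in a finite union of translates of (several) full-rank lattices. -/
def SubsetFiniteUnionOfTranslates (Λ : Set (Ed d)) : Prop :=
  ∃ (J : ℕ) (L : Fin J → Set (Ed d)) (v : Fin J → Ed d),
    (∀ j, IsFullRankLattice (L j)) ∧
    Λ ⊆ ⋃ j : Fin J, (fun x => v j + x) '' (L j)

/-- `Λ` is a finite union of translates of (several) full-rank lattices. -/
def EqFiniteUnionOfTranslates (Λ : Set (Ed d)) : Prop :=
  ∃ (J : ℕ) (L : Fin J → Set (Ed d)) (v : Fin J → Ed d),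
    (∀ j, IsFullRankLattice (L j)) ∧
    Λ = ⋃ j : Fin J, (fun x => v j + x) '' (L j)

end Paper

open Paper
open scoped RealInnerProductSpace

/-! Sampling a uniformly discrete measure by a bump narrower than the separation of its support
recovers each mass `p(λ)` as the value at `λ` of the convolution `t ↦ Σ p(λ') φ(t - λ')`.
This convolution is almost periodic, and an almost periodic function is bounded: every point
lies within a fixed distance `R` of a `1`-almost period, so the function is bounded by one
plus its maximum on the compact ball of radius `R`. -/

namespace Paper

theorem exists_pos_le_dist_of_pos_eta {d : ℕ} {A : Set (Ed d)} (h : 0 < eta A) :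
    ∃ r : ℝ, 0 < r ∧ ∀ x ∈ A, ∀ y ∈ A, x ≠ y → r ≤ dist x y := by
  obtain ⟨r, -, hr0, hrη⟩ := ENNReal.lt_iff_exists_real_btwn.1 h
  refine ⟨r, ENNReal.ofReal_pos.1 hr0, fun x hx y hy hxy => ?_⟩
  have hη : eta A ≤ edist x y :=
    iInf_le_of_le ⟨x, hx⟩ (iInf_le_of_le ⟨y, hy⟩ (iInf_le_of_le hxy le_rfl))
  rw [edist_dist] at hη
  exact (ENNReal.ofReal_le_ofReal_iff dist_nonneg).1 (hrη.trans_le hη).le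

theorem APFun.exists_norm_le {V : Type*} [SeminormedAddCommGroup V] [ProperSpace V]
    {g : V → ℂ} (hg : APFun g) : ∃ M : ℝ, ∀ t, ‖g t‖ ≤ M := by
  obtain ⟨R, -, hR⟩ := hg.2 1 one_pos
  obtain ⟨M, hM⟩ :=
    (isCompact_closedBall (0 : V) R).exists_bound_of_continuousOn hg.1.continuousOn
  refine ⟨M + 1, fun t => ?_⟩
  obtain ⟨τ, hτ, htτ⟩ := hR t
  have hball : t - τ ∈ closedBall (0 : V) R := by
    rwa [mem_closedBall, dist_zero_right, ← dist_eq_norm]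
  have hshift : ‖g t - g (t - τ)‖ < 1 := by simpa using hτ (t - τ)
  calc ‖g t‖ ≤ ‖g (t - τ)‖ + ‖g t - g (t - τ)‖ := norm_le_insert' _ _
    _ ≤ M + 1 := add_le_add (hM _ hball) hshift.le

theorem exists_contDiff_hasCompactSupport_eq_one_zero_of_le_norm {E : Type*}
    [NormedAddCommGroup E] [NormedSpace ℝ E] [FiniteDimensional ℝ E] {r : ℝ} (hr : 0 < r) :
    ∃ φ : E → ℂ, ContDiff ℝ ∞ φ ∧ HasCompactSupport φ ∧ φ 0 = 1 ∧
      ∀ x, r ≤ ‖x‖ → φ x = 0 := by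
  let f : ContDiffBump (0 : E) := ⟨r / 2, r, by positivity, by linarith⟩
  refine ⟨fun x => (f x : ℂ), ofRealCLM.contDiff.comp f.contDiff,
    f.hasCompactSupport.comp_left ofReal_zero, ?_, fun x hx => ?_⟩
  · simp [f.one_of_mem_closedBall (mem_closedBall_self (by positivity : (0 : ℝ) ≤ r / 2))]
  · simp [f.zero_of_le_dist (x := x) (by simpa using hx)]

theorem tsum_mul_sub_eq_of_le_dist {V R : Type*} [SeminormedAddCommGroup V] [Semiring R]
    [TopologicalSpace R] {A : Set V} {r : ℝ} (hA : ∀ x ∈ A, ∀ y ∈ A, x ≠ y → r ≤ dist x y)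
    (p : V → R) {φ : V → R} (hφ0 : φ 0 = 1) (hφr : ∀ x, r ≤ ‖x‖ → φ x = 0)
    {l : V} (hl : l ∈ A) :
    ∑' a : A, p a * φ (l - a) = p l := by
  rw [tsum_eq_single ⟨l, hl⟩ fun a ha => ?_]
  · simp [hφ0]
  · have hal : (a : V) ≠ l := fun h => ha (Subtype.ext h)
    rw [hφr _ (dist_eq_norm l a ▸ hA l hl a a.2 hal.symm), mul_zero]

end Paper

theorem statement8_general (d : ℕ) (Λ : Set (Ed d)) (p : Ed d → ℂ)
    (hΛ : IsUniformlyDiscrete Λ)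
    (hap : APMeasure Λ p) :
    ∃ C : ℝ, ∀ l ∈ Λ, ‖p l‖ ≤ C := by
  obtain ⟨r, hr, hsep⟩ := exists_pos_le_dist_of_pos_eta hΛ.2
  obtain ⟨φ, hφ, hφc, hφ0, hφr⟩ :=
    exists_contDiff_hasCompactSupport_eq_one_zero_of_le_norm (E := Ed d) hr
  obtain ⟨M, hM⟩ := (hap φ hφ hφc).exists_norm_le
  exact ⟨M, fun l hl => tsum_mul_sub_eq_of_le_dist hsep p hφ0 hφr hl ▸ hM l⟩

/-- Proposition 2 i): the masses of an almost periodic measure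
`μ = Σ_{λ∈Λ} p(λ) δ_λ` with uniformly discrete support are uniformly bounded. -/
theorem statement8 (d : ℕ) (Λ : Set (Ed d)) (p : Ed d → ℂ)
    (hΛ : IsUniformlyDiscrete Λ)
    (hsupp : ∀ l : Ed d, l ∉ Λ → p l = 0)
    (hap : APMeasure Λ p) :
    ∃ C : ℝ, ∀ l ∈ Λ, ‖p l‖ ≤ C :=
  statement8_general d Λ p hΛ hap

end
end

section
/- Let μ = Σ_{λ∈Λ} p(λ) δ_λ, with p(λ) ∈ ℂ, be an almost periodic measure on ℝ^d with uniformly discrete support Λ. If inf_{λ∈Λ} |p(λ)| ≥ α > 0, then the measure δ_Λ := Σ_{λ∈Λ} δ_λ is almost periodic as well. -/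
open Complex SchwartzMap Metric Set MeasureTheory
open scoped ContDiff ENNReal Pointwise Real

noncomputable section

open Paper
open scoped RealInnerProductSpace


/-!
Take `r` below half the separation of `Λ` and a bump `ψ` of radius `r` with `ψ 0 = 1`. The
function `g = μ ∗ ψ` equals `p λ` at `λ ∈ Λ` and vanishes off the `r`-neighbourhood of `Λ`, so
an `α`-almost period `τ` of `g` moves every point of `Λ` to within `r` of a point of `Λ`, since
`|g (λ + τ)| > |p λ| - α ≥ 0`. As `-τ` is an almost period too and `Λ` is `2r`-separated, this
gives a bijection `σ` of `Λ` with `|σ λ - λ - τ| < r`. Reindexing by `σ`, the difference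
`δ_Λ ∗ φ (t + τ) - δ_Λ ∗ φ (t)` is a sum of at most `2N` terms `φ (t + τ - σ λ) - φ (t - λ)`,
each small by uniform continuity of `φ`, where `N` bounds the number of points of `Λ` in a ball
of the radius of `supp φ`.
-/

section SeparatedSets

variable {E : Type*} [NormedAddCommGroup E]

theorem Metric.IsSeparated.lt_dist {X : Type*} [PseudoMetricSpace X] {s : Set X} {e : ℝ}
    (hs : IsSeparated (ENNReal.ofReal e) s) {x y : X} (hx : x ∈ s) (hy : y ∈ s) (hne : x ≠ y) :
    e < dist x y := by
  have h : ENNReal.ofReal e < edist x y := hs hx hy hne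
  rw [edist_dist] at h
  exact (ENNReal.ofReal_lt_ofReal_iff'.1 h).1

theorem Metric.IsSeparated.exists_ncard_inter_closedBall_le [ProperSpace E] {Λ : Set E} {e : ℝ}
    (he : 0 < e) (hs : IsSeparated (ENNReal.ofReal e) Λ) (R : ℝ) :
    ∃ N : ℕ, ∀ t : E, (Λ ∩ closedBall t R).Finite ∧ (Λ ∩ closedBall t R).ncard ≤ N := by
  obtain ⟨C, -, hCfin, hC⟩ :=
    finite_cover_balls_of_compact (isCompact_closedBall (0 : E) R) (half_pos he)
  refine ⟨C.ncard, fun t => ?_⟩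
  have hcover : ∀ x ∈ Λ ∩ closedBall t R, ∃ c ∈ C, x - t ∈ ball c (e / 2) := fun x hx => by
    simpa only [mem_iUnion₂, exists_prop] using
      hC (mem_closedBall_zero_iff.2 (by simpa only [mem_closedBall, dist_eq_norm] using hx.2))
  choose! f hfC hf using hcover
  have hinj : InjOn f (Λ ∩ closedBall t R) := by
    intro x hx y hy hxy
    by_contra hne
    have hfar := hs.lt_dist hx.1 hy.1 hne
    have hx' := hf x hx
    rw [hxy] at hx'
    have hclose : dist x y < e :=
      calc dist x y = dist (x - t) (y - t) := (dist_sub_right x y t).symm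
        _ ≤ dist (x - t) (f y) + dist (y - t) (f y) := dist_triangle_right _ _ _
        _ < e / 2 + e / 2 := add_lt_add hx' (hf y hy)
        _ = e := add_halves e
    linarith
  exact ⟨Finite.of_injOn hfC hinj hCfin, ncard_le_ncard_of_injOn f hfC hinj hCfin⟩

theorem Metric.IsSeparated.finite_inter_closedBall [ProperSpace E] {Λ : Set E} {e : ℝ}
    (he : 0 < e) (hs : IsSeparated (ENNReal.ofReal e) Λ) (t : E) (R : ℝ) :
    (Λ ∩ closedBall t R).Finite :=
  ((hs.exists_ncard_inter_closedBall_le he R).choose_spec t).1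

end SeparatedSets

section TranslateSums

open Function

variable {E F : Type*} [NormedAddCommGroup E] [NormedAddCommGroup F]
  {Λ : Set E} {φ : E → F} {M : ℝ}

theorem mem_closedBall_of_apply_sub_ne_zero (hM : tsupport φ ⊆ closedBall 0 M) {t l : E}
    (h : φ (t - l) ≠ 0) : l ∈ closedBall t M := by
  have h' := hM (subset_tsupport φ h)
  rwa [mem_closedBall_zero_iff, ← dist_eq_norm, dist_comm] at h'

theorem locallyFinite_support_comp_sub (hΛ : ∀ t R, (Λ ∩ closedBall t R).Finite)
    (hM : tsupport φ ⊆ closedBall 0 M) :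
    LocallyFinite fun l : Λ => support fun t => φ (t - l) := by
  intro x
  refine ⟨ball x 1, ball_mem_nhds x one_pos,
    ((hΛ x (M + 1)).preimage Subtype.val_injective.injOn).subset ?_⟩
  rintro l ⟨t, ht, htx⟩
  exact ⟨l.2, (dist_triangle _ t _).trans
    (add_le_add (mem_closedBall_of_apply_sub_ne_zero hM ht) (mem_ball.1 htx).le)⟩

theorem continuous_tsum_comp_sub (hΛ : ∀ t R, (Λ ∩ closedBall t R).Finite)
    (hM : tsupport φ ⊆ closedBall 0 M) (hφ : Continuous φ) :
    Continuous fun t => ∑' l : Λ, φ (t - l) := by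
  have hlf := locallyFinite_support_comp_sub hΛ hM
  simp_rw [tsum_eq_finsum (hlf.point_finite _)]
  exact continuous_finsum (fun l => hφ.comp (continuous_sub_right _)) hlf

theorem norm_tsum_le_ncard_support_mul {ι : Type*} {f : ι → F} (hf : (support f).Finite)
    {c : ℝ} (hc : ∀ i, ‖f i‖ ≤ c) : ‖∑' i, f i‖ ≤ (support f).ncard * c := by
  rw [tsum_eq_sum' (s := hf.toFinset) (by simp), ncard_eq_toFinset_card _ hf, ← nsmul_eq_mul]
  exact (norm_sum_le _ _).trans (Finset.sum_le_card_nsmul _ _ _ fun i _ => hc i)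

theorem finite_support_apply_sub_and_ncard_le {N : ℕ}
    (hΛ : ∀ t, (Λ ∩ closedBall t M).Finite ∧ (Λ ∩ closedBall t M).ncard ≤ N)
    (hM : tsupport φ ⊆ closedBall 0 M) (t : E) :
    (support fun l : Λ => φ (t - l)).Finite ∧ (support fun l : Λ => φ (t - l)).ncard ≤ N := by
  have hmaps : MapsTo Subtype.val (support fun l : Λ => φ (t - l)) (Λ ∩ closedBall t M) :=
    fun l hl => ⟨l.2, mem_closedBall_of_apply_sub_ne_zero hM hl⟩
  exact ⟨Finite.of_injOn hmaps Subtype.val_injective.injOn (hΛ t).1,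
    (ncard_le_ncard_of_injOn _ hmaps Subtype.val_injective.injOn (hΛ t).1).trans (hΛ t).2⟩

theorem norm_tsum_comp_add_sub_sub_tsum_comp_sub_le {N : ℕ}
    (hΛ : ∀ t, (Λ ∩ closedBall t M).Finite ∧ (Λ ∩ closedBall t M).ncard ≤ N)
    (hM : tsupport φ ⊆ closedBall 0 M) {σ : Λ ≃ Λ} {τ : E} {r c : ℝ}
    (hσ : ∀ l : Λ, dist (σ l : E) (l + τ) < r) (hφ : ∀ a b, dist a b < r → dist (φ a) (φ b) ≤ c)
    (hc : 0 ≤ c) (t : E) :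
    ‖∑' l : Λ, φ (t + τ - l) - ∑' l : Λ, φ (t - l)‖ ≤ 2 * N * c := by
  have hcount := finite_support_apply_sub_and_ncard_le hΛ hM
  have hA := hcount t
  set A := support fun l : Λ => φ (t - l)
  set B := support fun l : Λ => φ (t + τ - σ l)
  have hBmaps : MapsTo σ B (support fun l : Λ => φ (t + τ - l)) := fun _ hl => hl
  have hBfin : B.Finite := Finite.of_injOn hBmaps σ.injective.injOn (hcount (t + τ)).1
  have hBcard : B.ncard ≤ N :=
    (ncard_le_ncard_of_injOn σ hBmaps σ.injective.injOn (hcount (t + τ)).1).trans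
      (hcount (t + τ)).2
  have hsupp : (support fun l : Λ => φ (t + τ - σ l) - φ (t - l)) ⊆ B ∪ A := support_sub _ _
  have hcard : (support fun l : Λ => φ (t + τ - σ l) - φ (t - l)).ncard ≤ 2 * N :=
    calc _ ≤ (B ∪ A).ncard := ncard_le_ncard hsupp (hBfin.union hA.1)
      _ ≤ B.ncard + A.ncard := ncard_union_le B A
      _ ≤ 2 * N := by omega
  rw [← σ.tsum_eq, ← (summable_of_hasFiniteSupport hBfin).tsum_sub
    (summable_of_hasFiniteSupport hA.1)]
  refine (norm_tsum_le_ncard_support_mul ((hBfin.union hA.1).subset hsupp) fun l => ?_).trans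
    (by gcongr; exact_mod_cast hcard)
  rw [← dist_eq_norm]
  refine hφ _ _ ?_
  calc dist (t + τ - σ l) (t - l) = dist (σ l : E) (l + τ) := by
        rw [dist_eq_norm, dist_eq_norm']; congr 1; abel
    _ < r := hσ l

end TranslateSums

section AlmostPeriods

variable {E : Type*} [NormedAddCommGroup E]

theorem apFun_tsum_comp_sub [ProperSpace E] {Λ : Set E} {e : ℝ} (he : 0 < e)
    (hs : IsSeparated (ENNReal.ofReal e) Λ) {φ : E → ℂ} (hφ : Continuous φ)
    (hφc : HasCompactSupport φ)
    (hper : ∀ r > 0, RelDense {τ : E | ∃ σ : Λ ≃ Λ, ∀ l : Λ, dist (σ l : E) (l + τ) < r}) :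
    APFun fun t => ∑' l : Λ, φ (t - l) := by
  obtain ⟨M, hM⟩ := hφc.isBounded.subset_closedBall 0
  obtain ⟨N, hN⟩ := hs.exists_ncard_inter_closedBall_le he M
  refine ⟨continuous_tsum_comp_sub (hs.finite_inter_closedBall he) hM hφ, fun ε hε => ?_⟩
  obtain ⟨r, hr, hφr⟩ := Metric.uniformContinuous_iff.1
    (hφc.uniformContinuous_of_continuous hφ) (ε / (2 * N + 1)) (by positivity)
  obtain ⟨R, hR, hdense⟩ := hper r hr
  refine ⟨R, hR, fun x => ?_⟩
  obtain ⟨τ, ⟨σ, hσ⟩, hxτ⟩ := hdense x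
  refine ⟨τ, fun t => ?_, hxτ⟩
  calc _ ≤ 2 * N * (ε / (2 * N + 1)) :=
        norm_tsum_comp_add_sub_sub_tsum_comp_sub_le hN hM hσ (fun _ _ h => (hφr h).le)
          (by positivity) t
    _ < ε := by
        rw [mul_div_assoc', div_lt_iff₀ (by positivity)]
        linarith

theorem tsum_mul_apply_sub_eq {Λ : Set E} {p ψ : E → ℂ} {r : ℝ}
    (hs : IsSeparated (ENNReal.ofReal r) Λ) (hψ0 : ψ 0 = 1)
    (hψr : ∀ x, r ≤ ‖x‖ → ψ x = 0) (l : Λ) :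
    ∑' l' : Λ, p l' * ψ (l - l') = p l := by
  rw [tsum_eq_single l fun l' hne => ?_, sub_self, hψ0, mul_one]
  have hfar := hs.lt_dist l.2 l'.2 (Subtype.coe_injective.ne hne.symm)
  rw [hψr _ (by rw [← dist_eq_norm]; exact hfar.le), mul_zero]

theorem exists_dist_lt_of_tsum_mul_apply_sub_ne_zero {Λ : Set E} {p ψ : E → ℂ} {r : ℝ}
    (hψr : ∀ x, r ≤ ‖x‖ → ψ x = 0) {x : E} (h : ∑' l : Λ, p l * ψ (x - l) ≠ 0) :
    ∃ l : Λ, dist (l : E) x < r := by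
  by_contra! hfar
  refine h ((tsum_congr fun l => ?_).trans tsum_zero)
  rw [hψr _ (by rw [← dist_eq_norm, dist_comm]; exact hfar l), mul_zero]

theorem exists_dist_add_lt_of_almostPeriod {Λ : Set E} {p ψ : E → ℂ} {α r : ℝ}
    (hs : IsSeparated (ENNReal.ofReal r) Λ) (hlow : ∀ l ∈ Λ, α ≤ ‖p l‖) (hψ0 : ψ 0 = 1)
    (hψr : ∀ x, r ≤ ‖x‖ → ψ x = 0) {τ : E}
    (hτ : ∀ t, ‖∑' l : Λ, p l * ψ (t + τ - l) - ∑' l : Λ, p l * ψ (t - l)‖ < α) (l : Λ) :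
    ∃ l' : Λ, dist (l' : E) (l + τ) < r := by
  refine exists_dist_lt_of_tsum_mul_apply_sub_ne_zero (p := p) hψr fun h0 => ?_
  have h := hτ l
  rw [tsum_mul_apply_sub_eq hs hψ0 hψr, h0, zero_sub, norm_neg] at h
  exact (hlow l l.2).not_gt h

theorem exists_equiv_dist_add_lt {Λ : Set E} {r : ℝ}
    (hs : IsSeparated (ENNReal.ofReal (2 * r)) Λ) {τ : E}
    (hfwd : ∀ l : Λ, ∃ l' : Λ, dist (l' : E) (l + τ) < r)
    (hbwd : ∀ l : Λ, ∃ l' : Λ, dist (l' : E) (l + -τ) < r) :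
    ∃ σ : Λ ≃ Λ, ∀ l : Λ, dist (σ l : E) (l + τ) < r := by
  choose f hf using hfwd
  choose g hg using hbwd
  have huniq : ∀ (y : E) (l₁ l₂ : Λ), dist (l₁ : E) y < r → dist (l₂ : E) y < r → l₁ = l₂ := by
    intro y l₁ l₂ h₁ h₂
    by_contra hne
    have := hs.lt_dist l₁.2 l₂.2 (Subtype.coe_injective.ne hne)
    linarith [dist_triangle_right (l₁ : E) l₂ y]
  have hswap : ∀ a b : E, dist a (b + -τ) = dist b (a + τ) := fun a b => by
    rw [← sub_eq_add_neg, dist_sub_eq_dist_add_right, dist_comm]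
  refine ⟨⟨f, g, fun l => huniq (f l + -τ) _ _ (hg _) ?_,
    fun l => huniq (g l + τ) _ _ (hf _) ?_⟩, hf⟩
  · rw [hswap]
    exact hf l
  · rw [← hswap]
    exact hg l

end AlmostPeriods

namespace Paper

theorem exists_isSeparated_of_eta_pos {d : ℕ} {Λ : Set (Ed d)} (h : 0 < eta Λ) :
    ∃ e : ℝ, 0 < e ∧ IsSeparated (ENNReal.ofReal e) Λ := by
  obtain ⟨e, -, he, heta⟩ := ENNReal.lt_iff_exists_real_btwn.1 h
  exact ⟨e, ENNReal.ofReal_pos.1 he, fun x hx y hy hne =>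
    heta.trans_le (iInf_le_of_le ⟨x, hx⟩ (iInf_le_of_le ⟨y, hy⟩ (iInf_le _ hne)))⟩

theorem relDense_nearTranslations_of_apMeasure {d : ℕ} {Λ : Set (Ed d)} {p : Ed d → ℂ}
    {α e : ℝ} (he : 0 < e) (hs : IsSeparated (ENNReal.ofReal e) Λ) (hap : APMeasure Λ p)
    (hα : 0 < α) (hlow : ∀ l ∈ Λ, α ≤ ‖p l‖) (r : ℝ) (hr : 0 < r) :
    RelDense {τ : Ed d | ∃ σ : Λ ≃ Λ, ∀ l : Λ, dist (σ l : Ed d) (l + τ) < r} := by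
  set r' := min r (e / 2)
  have hr' : 0 < r' := lt_min hr (half_pos he)
  have hr'e : 2 * r' ≤ e := by linarith [min_le_right r (e / 2)]
  have hsep : ∀ {c}, c ≤ e → IsSeparated (ENNReal.ofReal c) Λ :=
    fun hc => hs.anti (ENNReal.ofReal_le_ofReal hc)
  let ψ : ContDiffBump (0 : Ed d) := ⟨r' / 2, r', by positivity, by linarith⟩
  have hψ0 : ((ψ 0 : ℝ) : ℂ) = 1 := by
    rw [ψ.one_of_mem_closedBall (mem_closedBall_self ψ.rIn_pos.le), ofReal_one]
  have hψr : ∀ x, r' ≤ ‖x‖ → ((ψ x : ℝ) : ℂ) = 0 := fun x hx => by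
    rw [ψ.zero_of_le_dist (by rwa [dist_zero_right]), ofReal_zero]
  obtain ⟨R, hR, hdense⟩ := (hap (fun x => (ψ x : ℂ)) (ofRealCLM.contDiff.comp ψ.contDiff)
    (ψ.hasCompactSupport.comp_left ofReal_zero)).2 α hα
  refine ⟨R, hR, fun x => ?_⟩
  obtain ⟨τ, hτ, hxτ⟩ := hdense x
  have hτneg : ∀ t, ‖∑' l : Λ, p l * ψ (t + -τ - l) - ∑' l : Λ, p l * ψ (t - l)‖ < α :=
    fun t => by
      have h := hτ (t - τ)
      beta_reduce at h
      rwa [sub_add_cancel, norm_sub_rev, sub_eq_add_neg] at h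
  have hs' := hsep (c := r') (by linarith)
  obtain ⟨σ, hσ⟩ := exists_equiv_dist_add_lt (hsep hr'e)
    (exists_dist_add_lt_of_almostPeriod hs' hlow hψ0 hψr hτ)
    (exists_dist_add_lt_of_almostPeriod hs' hlow hψ0 hψr hτneg)
  exact ⟨τ, ⟨σ, fun l => (hσ l).trans_le (min_le_left r (e / 2))⟩, hxτ⟩

end Paper

theorem statement10_general (d : ℕ) (Λ : Set (Ed d)) (p : Ed d → ℂ) (α : ℝ)
    (hΛ : IsUniformlyDiscrete Λ)
    (hap : APMeasure Λ p)
    (hα : 0 < α)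
    (hlow : ∀ l ∈ Λ, α ≤ ‖p l‖) :
    APMeasure Λ (fun _ => (1 : ℂ)) := by
  obtain ⟨e, he, hs⟩ := exists_isSeparated_of_eta_pos hΛ.2
  intro φ hφ hφc
  simpa only [one_mul] using apFun_tsum_comp_sub he hs hφ.continuous hφc
    (relDense_nearTranslations_of_apMeasure he hs hap hα hlow)

/-- Proposition 2 iii): if `μ = Σ_{λ∈Λ} p(λ) δ_λ` is an almost periodic
measure with uniformly discrete support and `inf_{λ∈Λ} |p(λ)| ≥ α > 0`, then
`δ_Λ = Σ_{λ∈Λ} δ_λ` is almost periodic. -/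
theorem statement10 (d : ℕ) (Λ : Set (Ed d)) (p : Ed d → ℂ) (α : ℝ)
    (hΛ : IsUniformlyDiscrete Λ)
    (hsupp : ∀ l : Ed d, l ∉ Λ → p l = 0)
    (hap : APMeasure Λ p)
    (hα : 0 < α)
    (hlow : ∀ l ∈ Λ, α ≤ ‖p l‖) :
    APMeasure Λ (fun _ => (1 : ℂ)) :=
  statement10_general d Λ p α hΛ hap hα hlow
end
end

section
/- Let μ₁,…,μ_N be almost periodic measures on ℝ^d with uniformly discrete supports. Then for any vector λ ∈ ℝ^d and any numbers ε > 0, ρ > 0 there is a relatively dense set T ⊂ ℝ^d such that for every λ' ∈ T there exist points λ^{(1)},…,λ^{(N)} with λ^{(n)} ∈ B(λ',ρ) and |μ_n({λ^{(n)}}) − μ_n({λ})| < ε for each n = 1,…,N (here μ({x}) denotes the mass of μ at the point x). -/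
open Complex SchwartzMap Metric Set MeasureTheory
open scoped ContDiff ENNReal Pointwise Real

noncomputable section

open Paper
open scoped RealInnerProductSpace

/-! Choose `r ≤ ρ` such that every `Λ n ∪ {λ}` is `2r`-separated, and a radial bump `φ ≥ 0` of
radius `r` with `φ 0 = 1`. The functions `g_n(t) = Σ_{x ∈ Λ n} p_n(x) φ(t - x)` are almost
periodic, hence have a relatively dense set of common `ε/2`-almost periods `τ`. Let `z` be the
point of `Λ n` in `B(λ + τ, r)` (or `λ + τ` itself if there is none) and `δ = z - λ - τ`; at
each of `λ`, `λ + δ`, `λ + τ`, `z` the sum defining `g_n` has at most one nonzero term, so comparing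
`g_n` at `λ + δ` with `z` and at `λ` with `λ + τ` gives `‖p z - p λ · φ δ‖ < ε/2` and
`‖p z · φ δ - p λ‖ < ε/2`. Adding them yields `(1 + φ δ) ‖p z - p λ‖ < ε`. -/

open Filter Topology

namespace Paper

section AlmostPeriodic

variable {V : Type*} [SeminormedAddCommGroup V]

theorem RelDense.image_const_add {T : Set V} (hT : RelDense T) (a : V) :
    RelDense ((a + ·) '' T) := by
  obtain ⟨R, hR, hT⟩ := hT
  refine ⟨R, hR, fun x => ?_⟩
  obtain ⟨τ, hτ, hxτ⟩ := hT (x - a)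
  exact ⟨a + τ, mem_image_of_mem _ hτ, by simpa [dist_eq_norm, sub_sub] using hxτ⟩

variable [ProperSpace V] {g : V → ℂ}

theorem APFun.uniformContinuous (hg : APFun g) : UniformContinuous g := by
  rw [Metric.uniformContinuous_iff]
  intro ε hε
  obtain ⟨R, -, hR⟩ := hg.2 (ε / 3) (by positivity)
  obtain ⟨δ, hδ, hδg⟩ := Metric.uniformContinuousOn_iff.1
    ((isCompact_closedBall (0 : V) (R + 1)).uniformContinuousOn_of_continuous hg.1.continuousOn)
    (ε / 3) (by positivity)
  refine ⟨min δ 1, by positivity, fun {a b} hab => ?_⟩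
  obtain ⟨τ, hτ, haτ⟩ := hR (-a)
  have ha : dist (a + τ) 0 ≤ R := by
    rwa [dist_zero_right, ← norm_neg, neg_add, ← sub_eq_add_neg, ← dist_eq_norm]
  have hb : dist (b + τ) 0 ≤ R + 1 := by
    have := dist_triangle (b + τ) (a + τ) 0
    rw [dist_add_right, dist_comm b a] at this
    linarith [(lt_min_iff.1 hab).2]
  have hshift : ∀ t, dist (g t) (g (t + τ)) < ε / 3 := fun t => by
    rw [dist_comm, dist_eq_norm]; exact hτ t
  calc dist (g a) (g b)
      ≤ dist (g a) (g (a + τ)) + dist (g (a + τ)) (g (b + τ)) + dist (g (b + τ)) (g b) :=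
        dist_triangle4 _ _ _ _
    _ < ε / 3 + ε / 3 + ε / 3 := by
        gcongr
        · exact hshift a
        · refine hδg _ (mem_closedBall.2 (by linarith)) _ (mem_closedBall.2 hb) ?_
          rw [dist_add_right]; exact (lt_min_iff.1 hab).1
        · rw [dist_comm]; exact hshift b
    _ = ε := by ring

theorem APFun.exists_finite_net (hg : APFun g) {ε : ℝ} (hε : 0 < ε) :
    ∃ Φ : V → V, (range Φ).Finite ∧ ∀ s t, dist (g (t + s)) (g (t + Φ s)) < ε := by
  obtain ⟨R, -, hR⟩ := hg.2 (ε / 2) (half_pos hε)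
  obtain ⟨δ, hδ, hδg⟩ := Metric.uniformContinuous_iff.1 hg.uniformContinuous (ε / 2) (half_pos hε)
  obtain ⟨S, hSfin, hScov⟩ :=
    totallyBounded_iff.1 (isCompact_closedBall (0 : V) R).totallyBounded δ hδ
  have hnet : ∀ s, ∃ σ ∈ S, ∀ t, dist (g (t + s)) (g (t + σ)) < ε := fun s => by
    obtain ⟨τ, hτ, hsτ⟩ := hR s
    have hs : s - τ ∈ closedBall (0 : V) R := by rwa [mem_closedBall_zero_iff, ← dist_eq_norm]
    obtain ⟨σ, hσS, hσ⟩ := mem_iUnion₂.1 (hScov hs)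
    refine ⟨σ, hσS, fun t => ?_⟩
    calc dist (g (t + s)) (g (t + σ))
        ≤ dist (g (t + (s - τ) + τ)) (g (t + (s - τ))) + dist (g (t + (s - τ))) (g (t + σ)) := by
          rw [add_sub_assoc', sub_add_cancel]; exact dist_triangle _ _ _
      _ < ε / 2 + ε / 2 := by
          gcongr
          · rw [dist_eq_norm]; exact hτ _
          · exact hδg (by rwa [dist_add_left])
      _ = ε := add_halves ε
  choose Φ hΦS hΦ using hnet
  exact ⟨Φ, hSfin.subset (range_subset_iff.2 hΦS), hΦ⟩

theorem relDense_common_almostPeriods {ι : Type*} [Finite ι] {g : ι → V → ℂ}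
    (hg : ∀ i, APFun (g i)) {ε : ℝ} (hε : 0 < ε) :
    RelDense {τ : V | ∀ i t, ‖g i (t + τ) - g i t‖ < ε} := by
  choose Φ hΦfin hΦ using fun i => (hg i).exists_finite_net (half_pos hε)
  let Ψ : V → ι → V := fun s i => Φ i s
  have : Finite (range Ψ) :=
    ((Set.Finite.pi hΦfin).subset (by rintro _ ⟨s, rfl⟩ i -; exact ⟨s, rfl⟩)).to_subtype
  -- `s` and `rep s` share their net points, so `s - rep s` is an almost period,
  -- and `rep s` ranges over a finite set.
  let rep : V → V := fun s => rangeSplitting Ψ ⟨Ψ s, s, rfl⟩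
  have hrep : ∀ s, Ψ (rep s) = Ψ s := fun s => apply_rangeSplitting Ψ _
  obtain ⟨R, hR⟩ := isBounded_iff_forall_norm_le.1 (finite_range (rangeSplitting Ψ)).isBounded
  refine ⟨max R 1, by positivity, fun s => ⟨s - rep s, fun i t => ?_, ?_⟩⟩
  · have hi : Φ i (rep s) = Φ i s := congrFun (hrep s) i
    rw [← dist_eq_norm]
    calc dist (g i (t + (s - rep s))) (g i t)
        ≤ dist (g i (t - rep s + s)) (g i (t - rep s + Φ i s))
          + dist (g i (t - rep s + rep s)) (g i (t - rep s + Φ i (rep s))) := by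
          rw [hi, sub_add_cancel, ← add_sub_assoc, add_sub_right_comm]
          exact dist_triangle_right _ _ _
      _ < ε / 2 + ε / 2 := add_lt_add (hΦ i s _) (hΦ i (rep s) _)
      _ = ε := add_halves ε
  · rw [dist_eq_norm, sub_sub_cancel]
    exact (hR _ (mem_range_self _)).trans (le_max_left _ _)

end AlmostPeriodic

section Separation

variable {d : ℕ}

theorem eta_le_edist {A : Set (Ed d)} {x y : Ed d} (hx : x ∈ A) (hy : y ∈ A) (hxy : x ≠ y) :
    eta A ≤ edist x y :=
  iInf_le_of_le ⟨x, hx⟩ <| iInf_le_of_le ⟨y, hy⟩ <| iInf_le _ hxy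

theorem exists_pos_pairwise_le_dist_of_eta_pos {A : Set (Ed d)} (h : 0 < eta A) :
    ∃ c > 0, A.Pairwise fun x y => c ≤ dist x y := by
  refine ⟨(min (eta A) 1).toReal, ENNReal.toReal_pos (lt_min h one_pos).ne'
    (ne_top_of_le_ne_top ENNReal.one_ne_top (min_le_right _ _)), fun x hx y hy hxy => ?_⟩
  change _ ≤ dist x y
  rw [dist_edist]
  exact ENNReal.toReal_mono (edist_ne_top x y) ((min_le_left _ _).trans (eta_le_edist hx hy hxy))

theorem IsLocallyFinite.exists_pos_le_dist {A : Set (Ed d)} (hA : IsLocallyFinite A) (l : Ed d) :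
    ∃ m > 0, ∀ x ∈ A, x ≠ l → m ≤ dist x l := by
  obtain ⟨m, hm, hball⟩ :=
    Metric.isOpen_iff.1 (hA l 1).sdiff.isClosed.isOpen_compl l (by simp : l ∉ (A ∩ ball l 1) \ {l})
  refine ⟨min m 1, by positivity, fun x hx hxl => not_lt.1 fun hlt => ?_⟩
  exact hball (mem_ball.2 (hlt.trans_le (min_le_left _ _)))
    ⟨⟨hx, mem_ball.2 (hlt.trans_le (min_le_right _ _))⟩, hxl⟩

theorem IsUniformlyDiscrete.exists_pos_pairwise_insert {A : Set (Ed d)}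
    (hA : IsUniformlyDiscrete A) (l : Ed d) :
    ∃ c > 0, (insert l A).Pairwise fun x y => c ≤ dist x y := by
  obtain ⟨c, hc, hsep⟩ := exists_pos_pairwise_le_dist_of_eta_pos hA.2
  obtain ⟨m, hm, hiso⟩ := hA.1.exists_pos_le_dist l
  refine ⟨min c m, lt_min hc hm, ?_⟩
  rw [pairwise_insert]
  refine ⟨hsep.mono' fun x y h => (min_le_left _ _).trans h, fun x hx hlx => ?_⟩
  have := (min_le_right c m).trans (hiso x hx hlx.symm)
  exact ⟨by rwa [dist_comm], this⟩

end Separation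

end Paper

section PointMasses

variable {E : Type*} [NormedAddCommGroup E]

theorem Set.Pairwise.exists_mem_ball_inter_subset_singleton {A : Set E} {r : ℝ}
    (hA : A.Pairwise fun x y => 2 * r ≤ dist x y) (hr : 0 < r) (y : E) :
    ∃ z ∈ ball y r, A ∩ (ball y r ∪ ball z r) ⊆ {z} := by
  by_cases h : ∃ z ∈ A, dist z y < r
  · obtain ⟨z, hzA, hzy⟩ := h
    refine ⟨z, hzy, fun x ⟨hxA, hx⟩ => by_contra fun hxz => ?_⟩
    have hfar := hA hxA hzA hxz
    rcases hx with hx | hx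
    · linarith [dist_triangle x y z, dist_comm z y, mem_ball.1 hx]
    · linarith [mem_ball.1 hx]
  · push Not at h
    refine ⟨y, mem_ball_self hr, fun x ⟨hxA, hx⟩ => ?_⟩
    rw [union_self, mem_ball] at hx
    exact absurd (h x hxA) (not_le.2 hx)

theorem tsum_mul_sub_eq_single {R : Type*} [NonUnitalNonAssocSemiring R] [TopologicalSpace R]
    {Λ : Set E} {p φ : E → R} {r : ℝ} (hp : ∀ x ∉ Λ, p x = 0) (hφ : ∀ x, r ≤ ‖x‖ → φ x = 0)
    {t x₀ : E} (hx₀ : Λ ∩ ball t r ⊆ {x₀}) :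
    ∑' x : Λ, p x * φ (t - x) = p x₀ * φ (t - x₀) := by
  rw [tsum_subtype_eq_of_support_subset (f := fun x => p x * φ (t - x)), tsum_eq_single x₀]
  · intro x hxx₀
    by_cases hx : x ∈ Λ
    · have hfar : r ≤ ‖t - x‖ := by
        rw [← dist_eq_norm, dist_comm]
        exact not_lt.1 fun hxt => hxx₀ (hx₀ ⟨hx, hxt⟩)
      rw [hφ _ hfar, mul_zero]
    · rw [hp x hx, zero_mul]
  · intro x hx
    by_contra hxΛ
    exact hx (show p x * φ (t - x) = 0 by rw [hp x hxΛ, zero_mul])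

theorem norm_sub_lt_of_norm_sub_mul_lt {𝕜 : Type*} [RCLike 𝕜] {a b : 𝕜} {c e : ℝ} (hc : 0 ≤ c)
    (h₁ : ‖a - b * c‖ < e) (h₂ : ‖a * c - b‖ < e) : ‖a - b‖ < 2 * e := by
  have hnorm : ‖1 + (c : 𝕜)‖ = 1 + c := by
    rw [← RCLike.ofReal_one, ← RCLike.ofReal_add, RCLike.norm_ofReal, abs_of_nonneg (by linarith)]
  calc ‖a - b‖ ≤ (1 + c) * ‖a - b‖ := le_mul_of_one_le_left (norm_nonneg _) (by linarith)
    _ = ‖(a - b * c) + (a * c - b)‖ := by rw [← hnorm, ← norm_mul]; ring_nf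
    _ ≤ ‖a - b * c‖ + ‖a * c - b‖ := norm_add_le _ _
    _ < 2 * e := by linarith

theorem exists_mem_ball_norm_sub_lt_of_almostPeriod {Λ : Set E} {p : E → ℂ} {φ : E → ℝ}
    {r ε : ℝ} {l τ : E} (hp : ∀ x ∉ Λ, p x = 0)
    (hsep : (insert l Λ).Pairwise fun x y => 2 * r ≤ dist x y) (hr : 0 < r)
    (hφ0 : φ 0 = 1) (hφ_nonneg : ∀ x, 0 ≤ φ x) (hφ_neg : ∀ x, φ (-x) = φ x)
    (hφr : ∀ x, r ≤ ‖x‖ → φ x = 0)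
    (hτ : ∀ t, ‖∑' x : Λ, p x * (φ (t + τ - x) : ℂ) - ∑' x : Λ, p x * (φ (t - x) : ℂ)‖ < ε) :
    ∃ z ∈ ball (l + τ) r, ‖p z - p l‖ < 2 * ε := by
  set g : E → ℂ := fun t => ∑' x : Λ, p x * (φ (t - x) : ℂ)
  have hgτ : ∀ t, ‖g (t + τ) - g t‖ < ε := hτ
  have heval : ∀ {t x₀}, Λ ∩ ball t r ⊆ {x₀} → g t = p x₀ * φ (t - x₀) := fun h =>
    tsum_mul_sub_eq_single (φ := fun x => (φ x : ℂ)) hp (fun x hx => by simp [hφr x hx]) h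
  have hl : ∀ t, dist t l < r → g t = p l * φ (t - l) := fun t htl => heval fun x ⟨hxΛ, hxt⟩ =>
    by_contra fun hxl => by
      have hfar := hsep (mem_insert_of_mem l hxΛ) (mem_insert l Λ) hxl
      linarith [dist_triangle x t l, mem_ball.1 hxt]
  obtain ⟨z, hz, hzΛ⟩ :=
    (hsep.mono (subset_insert l Λ)).exists_mem_ball_inter_subset_singleton hr (l + τ)
  set δ := z - (l + τ)
  have hδ : ‖δ‖ < r := by rw [← dist_eq_norm]; exact hz
  have h₁ : ‖p z - p l * φ δ‖ < ε := by
    have := hgτ (l + δ)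
    rwa [show l + δ + τ = z by simp only [δ]; abel,
      heval ((inter_subset_inter_right _ subset_union_right).trans hzΛ), sub_self, hφ0,
      hl _ (by rwa [dist_eq_norm, add_sub_cancel_left]), add_sub_cancel_left,
      Complex.ofReal_one, mul_one] at this
  have h₂ : ‖p z * φ δ - p l‖ < ε := by
    have := hgτ l
    rwa [heval ((inter_subset_inter_right _ subset_union_left).trans hzΛ),
      hl l (by rwa [dist_self]), sub_self, hφ0, Complex.ofReal_one, mul_one,
      show l + τ - z = -δ by simp only [δ]; abel, hφ_neg] at this
  exact ⟨z, hz, norm_sub_lt_of_norm_sub_mul_lt (hφ_nonneg δ) h₁ h₂⟩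

end PointMasses

/-- Proposition 2 v): for almost periodic measures `μ_1, …, μ_N` with
uniformly discrete supports, for any `λ ∈ ℝ^d`, `ε > 0`, `ρ > 0` there is a relatively
dense set `T` such that for each `λ' ∈ T` and each `n` there is
`λ^{(n)} ∈ B(λ', ρ)` with `|μ_n({λ^{(n)}}) − μ_n({λ})| < ε`. -/
theorem statement12 (d N : ℕ) (Λ : Fin N → Set (Ed d)) (p : Fin N → Ed d → ℂ)
    (hΛ : ∀ n, IsUniformlyDiscrete (Λ n))
    (hsupp : ∀ n, ∀ l : Ed d, l ∉ Λ n → p n l = 0)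
    (hap : ∀ n, APMeasure (Λ n) (p n)) :
    ∀ (l : Ed d) (ε ρ : ℝ), 0 < ε → 0 < ρ →
      ∃ T : Set (Ed d), RelDense T ∧
        ∀ l' ∈ T, ∀ n : Fin N,
          ∃ ln : Ed d, ln ∈ Metric.ball l' ρ ∧ ‖p n ln - p n l‖ < ε := by
  intro l ε ρ hε hρ
  have hsmall : ∀ n, ∀ᶠ r in 𝓝[>] (0 : ℝ),
      (insert l (Λ n)).Pairwise fun x y => 2 * r ≤ dist x y := fun n => by
    obtain ⟨c, hc, hc_sep⟩ := (hΛ n).exists_pos_pairwise_insert l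
    filter_upwards [Ioo_mem_nhdsGT (half_pos hc)] with r hr
    exact hc_sep.mono' fun x y h => by linarith [hr.2]
  have hρ' : ∀ᶠ r in 𝓝[>] (0 : ℝ), r ∈ Ioc 0 ρ := Ioc_mem_nhdsGT hρ
  obtain ⟨r, ⟨hr, hrρ⟩, hsep⟩ := (hρ'.and (eventually_all.2 hsmall)).exists
  let b : ContDiffBump (0 : Ed d) := ⟨r / 2, r, half_pos hr, half_lt_self hr⟩
  have hg : ∀ n, APFun fun t => ∑' x : Λ n, p n x * ((b (t - x) : ℝ) : ℂ) := fun n =>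
    hap n _ (ofRealCLM.contDiff.comp b.contDiff) (b.hasCompactSupport.comp_left ofReal_zero)
  refine ⟨(l + ·) '' _, (relDense_common_almostPeriods hg (half_pos hε)).image_const_add l, ?_⟩
  rintro _ ⟨τ, hτ, rfl⟩ n
  obtain ⟨z, hz, hpz⟩ := exists_mem_ball_norm_sub_lt_of_almostPeriod (hsupp n) (hsep n) hr
    (b.one_of_mem_closedBall (mem_closedBall_self (half_pos hr).le)) (fun _ => b.nonneg)
    (fun x => by simpa using b.sub x) (fun x hx => b.zero_of_le_dist (by simpa using hx)) (hτ n)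
  exact ⟨z, ball_subset_ball hrρ hz, by linarith⟩
end
end
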